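/- arXiv:1811.04205 — 2 statements merged into one kernel-verified Lean document; each statement's English description precedes it below -/
import Mathlib

section
/- Let x^0 be a random vector in ℝ^n with independent components, each symmetric about 0, and such that E[x^0_j / x^0_k] exists for all j,k. Then for a diagonalizable real matrix A with biorthogonal left/right eigenvectors ℓ^i, r^i, the mode-in-state participation factor p_{ki} := E[(ℓ^i x^0) r^i_k / x^0_k] equals ℓ^i_k r^i_k. -/
/-!
Expanding `ℓ^i x⁰` turns `p_{ki}` into `∑ⱼ ℓ^i_j r^i_k E[x⁰_j / x⁰_k]`. For `j ≠ k`, independence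
and symmetry of `x⁰_j` give `(x⁰_j, x⁰_k)` the same law as `(-x⁰_j, x⁰_k)`, so `E[x⁰_j / x⁰_k]`
equals its own negative and vanishes; the term `j = k` contributes `ℓ^i_k r^i_k`.
-/

open MeasureTheory ProbabilityTheory Finset

section Symmetric

variable {Ω β : Type*} [MeasurableSpace Ω] {μ : Measure Ω} [IsFiniteMeasure μ]
  [MeasurableSpace β] {X : Ω → ℝ} {Y : Ω → β}

lemma map_prodMk_neg_eq_of_indepFun (hX : Measurable X) (hY : Measurable Y)
    (hind : IndepFun X Y μ) (hsym : μ.map X = μ.map (fun ω => -X ω)) :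
    μ.map (fun ω => (-X ω, Y ω)) = μ.map (fun ω => (X ω, Y ω)) := by
  have hXn : Measurable fun ω => -X ω := hX.neg
  have hind_neg : IndepFun (fun ω => -X ω) Y μ := hind.comp measurable_neg measurable_id
  rw [(indepFun_iff_map_prod_eq_prod_map_map hXn.aemeasurable hY.aemeasurable).mp hind_neg,
    (indepFun_iff_map_prod_eq_prod_map_map hX.aemeasurable hY.aemeasurable).mp hind, hsym]

lemma integral_mul_comp_eq_zero_of_indepFun (hX : Measurable X) (hY : Measurable Y)
    (hind : IndepFun X Y μ) (hsym : μ.map X = μ.map (fun ω => -X ω))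
    {g : β → ℝ} (hg : Measurable g) :
    ∫ ω, X ω * g (Y ω) ∂μ = 0 := by
  have hF : Measurable fun p : ℝ × β => p.1 * g p.2 := measurable_fst.mul (hg.comp measurable_snd)
  have h_neg : ∫ ω, -X ω * g (Y ω) ∂μ = ∫ ω, X ω * g (Y ω) ∂μ := by
    rw [← integral_map (φ := fun ω => (-X ω, Y ω)) (hX.neg.prodMk hY).aemeasurable
        hF.aestronglyMeasurable,
      map_prodMk_neg_eq_of_indepFun hX hY hind hsym,
      integral_map (hX.prodMk hY).aemeasurable hF.aestronglyMeasurable]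
  simp only [neg_mul, integral_neg] at h_neg
  linarith

end Symmetric

lemma integral_div_eq_ite {Ω ι : Type*} [DecidableEq ι] [MeasurableSpace Ω] {μ : Measure Ω}
    [IsProbabilityMeasure μ] {X : ι → Ω → ℝ} (hmeas : ∀ i, Measurable (X i))
    (hindep : iIndepFun X μ) (hsym : ∀ j, μ.map (X j) = μ.map (fun ω => -X j ω))
    {k : ι} (hne : ∀ᵐ ω ∂μ, X k ω ≠ 0) (j : ι) :
    ∫ ω, X j ω / X k ω ∂μ = if j = k then 1 else 0 := by
  split_ifs with hjk
  · subst hjk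
    rw [integral_congr_ae (hne.mono fun ω h => div_self h)]
    simp
  · simpa only [div_eq_mul_inv] using integral_mul_comp_eq_zero_of_indepFun (hmeas j) (hmeas k)
      (hindep.indepFun hjk) (hsym j) measurable_inv

theorem stmt5_general {Ω : Type*} [MeasurableSpace Ω] (μ : Measure Ω) [IsProbabilityMeasure μ]
    (n : ℕ) (X : Fin n → Ω → ℝ)
    (hmeas : ∀ i, Measurable (X i))
    (hindep : iIndepFun X μ)
    (hsym : ∀ j, Measure.map (X j) μ = Measure.map (fun ω => -(X j ω)) μ)
    (r l : Fin n → Fin n → ℝ)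
    (k : Fin n) (hne : ∀ᵐ ω ∂μ, X k ω ≠ 0)
    (hint : ∀ j, Integrable (fun ω => X j ω / X k ω) μ) :
    ∀ i, ∫ ω, (∑ j, l i j * X j ω) * r i k / X k ω ∂μ = l i k * r i k := by
  intro i
  have h_expand : (fun ω => (∑ j, l i j * X j ω) * r i k / X k ω)
      = fun ω => ∑ j, l i j * r i k * (X j ω / X k ω) := by
    funext ω
    simp only [sum_mul, sum_div]
    exact sum_congr rfl fun j _ => by ring
  rw [h_expand, integral_finsetSum _ fun j _ => (hint j).const_mul (l i j * r i k)]
  simp [integral_const_mul, integral_div_eq_ite hmeas hindep hsym hne]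

/-- If the random initial state `x⁰ = X` has independent components, each
symmetric about `0`, with `X k ≠ 0` a.s. and all ratios `X j / X k` integrable, then for
a real matrix `A` with biorthogonal left/right eigenvectors `l i`, `r i`, the
mode-in-state participation factor `p_{ki} = E[(l i ⬝ x⁰) r i k / x⁰ k]` equals
`l i k * r i k`. -/
theorem stmt5 {Ω : Type*} [MeasurableSpace Ω] (μ : Measure Ω) [IsProbabilityMeasure μ]
    (n : ℕ) (X : Fin n → Ω → ℝ)
    (hmeas : ∀ i, Measurable (X i))
    (hindep : iIndepFun X μ)
    (hsym : ∀ j, Measure.map (X j) μ = Measure.map (fun ω => -(X j ω)) μ)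
    (A : Matrix (Fin n) (Fin n) ℝ) (lam : Fin n → ℝ)
    (r l : Fin n → Fin n → ℝ)
    (hdist : Function.Injective lam)
    (hr : ∀ i, A.mulVec (r i) = lam i • r i)
    (hl : ∀ i, Matrix.vecMul (l i) A = lam i • l i)
    (hnorm : ∀ i j, ∑ k, l i k * r j k = if i = j then 1 else 0)
    (k : Fin n) (hne : ∀ᵐ ω ∂μ, X k ω ≠ 0)
    (hint : ∀ j, Integrable (fun ω => X j ω / X k ω) μ) :
    ∀ i, ∫ ω, (∑ j, l i j * X j ω) * r i k / X k ω ∂μ = l i k * r i k :=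
  stmt5_general μ n X hmeas hindep hsym r l k hne hint
end

section
/- Let S ⊂ ℝ^n be a bounded measurable set of positive measure that is symmetric with respect to each coordinate hyperplane {x_k = 0} (i.e., invariant under flipping the sign of any single coordinate), and suppose the function x ↦ x_j/x_k is integrable on S for j ≠ k. Then the average of x_j/x_k over S is 0 for j ≠ k, and consequently the set-theoretic mode-in-state participation factor avg_{x^0 ∈ S} (ℓ^i x^0) r^i_k / x^0_k equals ℓ^i_k r^i_k. -/
/-!
The reflection `x_j ↦ -x_j` preserves Lebesgue measure and maps `S` onto itself, while it
negates `x_j / x_k` for `j ≠ k`; hence the integral of `x_j / x_k` over `S` equals its own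
negative and vanishes. Expanding `(ℓ ⬝ x) r_k / x_k = ∑_m ℓ_m r_k (x_m / x_k)`, only the term
`m = k`, where `x_k / x_k = 1` a.e., survives averaging.
-/

open MeasureTheory

theorem MeasureTheory.MeasurePreserving.setIntegral_eq_zero_of_comp_eq_neg
    {α E : Type*} [MeasurableSpace α] [NormedAddCommGroup E] [NormedSpace ℝ E]
    {μ : Measure α} {f : α → α} {s : Set α} {g : α → E}
    (hf : MeasurePreserving f μ μ) (hf' : MeasurableEmbedding f) (hs : f '' s = s)
    (hg : ∀ x, g (f x) = -g x) :
    ∫ x in s, g x ∂μ = 0 := by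
  have : IsAddTorsionFree E := .of_isTorsionFree ℝ E
  have h := hf.setIntegral_image_emb hf' g s
  simp_rw [hs, hg, integral_neg] at h
  exact self_eq_neg.mp h

namespace Pi

variable {ι : Type*} [DecidableEq ι]

def reflect (j : ι) (x : ι → ℝ) : ι → ℝ := Function.update x j (-(x j))

@[simp] lemma reflect_apply_self (j : ι) (x : ι → ℝ) : reflect j x j = -x j := by
  simp [reflect]

@[simp] lemma reflect_apply_of_ne {i j : ι} (h : i ≠ j) (x : ι → ℝ) : reflect j x i = x i := by
  simp [reflect, h]

lemma reflect_involutive (j : ι) : Function.Involutive (reflect j) := by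
  intro x; simp [reflect]

lemma measurableEmbedding_reflect (j : ι) : MeasurableEmbedding (reflect j) :=
  (MeasurableEquiv.ofInvolutive _ (reflect_involutive j)
    (by unfold reflect; fun_prop)).measurableEmbedding

lemma volume_preserving_reflect [Fintype ι] (j : ι) :
    MeasurePreserving (reflect j) (volume : Measure (ι → ℝ)) volume := by
  have hneg : ∀ i, MeasurePreserving (if i = j then (Neg.neg : ℝ → ℝ) else id) volume volume := by
    intro i
    split_ifs
    exacts [Measure.measurePreserving_neg volume, MeasurePreserving.id volume]
  have hpi : reflect j = fun x i => (if i = j then (Neg.neg : ℝ → ℝ) else id) (x i) := by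
    funext x i
    rcases eq_or_ne i j with rfl | h <;> simp [*]
  rw [hpi]
  exact volume_preserving_pi hneg

end Pi

section CoordinateRatios

variable {ι : Type*} [Fintype ι]

theorem setIntegral_coord_div_coord_eq_zero [DecidableEq ι] {S : Set (ι → ℝ)} {j k : ι}
    (hjk : j ≠ k) (hS : Pi.reflect j '' S = S) :
    ∫ x in S, x j / x k = 0 :=
  (Pi.volume_preserving_reflect j).setIntegral_eq_zero_of_comp_eq_neg
    (Pi.measurableEmbedding_reflect j) hS fun x => by simp [hjk.symm, neg_div]

theorem setAverage_sum_mul_div_coord {μ : Measure (ι → ℝ)} {S : Set (ι → ℝ)} {k : ι}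
    (hS₀ : μ S ≠ 0) (hS : μ S ≠ ⊤) (hne : ∀ᵐ x ∂(μ.restrict S), x k ≠ 0)
    (hint : ∀ j, IntegrableOn (fun x => x j / x k) S μ)
    (hzero : ∀ j, j ≠ k → ∫ x in S, x j / x k ∂μ = 0) (c : ι → ℝ) (b : ℝ) :
    ⨍ x in S, (∑ m, c m * x m) * b / x k ∂μ = c k * b := by
  have hsplit : ∀ x : ι → ℝ, (∑ m, c m * x m) * b / x k = ∑ m, (c m * b) * (x m / x k) := by
    intro x
    rw [Finset.sum_mul, Finset.sum_div]
    exact Finset.sum_congr rfl fun m _ => by ring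
  have hkk : ∫ x in S, x k / x k ∂μ = μ.real S := by
    rw [integral_congr_ae (g := fun _ => (1 : ℝ)) (hne.mono fun x hx => div_self hx)]
    simp
  simp_rw [hsplit, setAverage_eq]
  rw [integral_finsetSum _ fun m _ => (hint m).const_mul _,
    Finset.sum_eq_single_of_mem k (Finset.mem_univ k)
      fun m _ hm => by rw [integral_const_mul, hzero m hm, mul_zero],
    integral_const_mul, hkk, smul_eq_mul, measureReal_def]
  have : (μ S).toReal ≠ 0 := ENNReal.toReal_ne_zero.mpr ⟨hS₀, hS⟩
  field_simp

end CoordinateRatios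

theorem stmt6_general (n : ℕ) (S : Set (Fin n → ℝ))
    (hSbdd : Bornology.IsBounded S)
    (hSpos : 0 < volume S)
    (hSsym : ∀ j : Fin n, (fun x => Function.update x j (-(x j))) '' S = S)
    (r l : Fin n → Fin n → ℝ)
    (k : Fin n)
    (hne : ∀ᵐ x ∂(volume.restrict S), x k ≠ 0)
    (hint : ∀ j, IntegrableOn (fun x => x j / x k) S volume) :
    (∀ j, j ≠ k → ⨍ x in S, x j / x k = 0) ∧
    (∀ i, ⨍ x in S, (∑ m, l i m * x m) * r i k / x k = l i k * r i k) := by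
  have hzero : ∀ j, j ≠ k → ∫ x in S, x j / x k = 0 := fun j hjk =>
    setIntegral_coord_div_coord_eq_zero hjk (hSsym j)
  exact ⟨fun j hjk => by rw [setAverage_eq, hzero j hjk, smul_zero], fun i =>
    setAverage_sum_mul_div_coord hSpos.ne' hSbdd.measure_lt_top.ne hne hint hzero (l i) (r i k)⟩

/-- Let `S ⊂ ℝⁿ` be a bounded measurable set of positive measure,
symmetric with respect to each coordinate hyperplane `{x_j = 0}` (invariant under
flipping the sign of any single coordinate), with `x_j / x_k` integrable on `S` and
`x_k ≠ 0` a.e. on `S`.  Then the average of `x_j / x_k` over `S` is `0` for `j ≠ k`,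
and consequently the set-theoretic mode-in-state participation factor
`avg_{x⁰ ∈ S} (l i ⬝ x⁰) r i k / x⁰ k` equals `l i k * r i k`. -/
theorem stmt6 (n : ℕ) (S : Set (Fin n → ℝ))
    (hSmeas : MeasurableSet S) (hSbdd : Bornology.IsBounded S)
    (hSpos : 0 < volume S)
    (hSsym : ∀ j : Fin n, (fun x => Function.update x j (-(x j))) '' S = S)
    (A : Matrix (Fin n) (Fin n) ℝ) (lam : Fin n → ℝ)
    (r l : Fin n → Fin n → ℝ)
    (hr : ∀ i, A.mulVec (r i) = lam i • r i)
    (hl : ∀ i, Matrix.vecMul (l i) A = lam i • l i)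
    (hnorm : ∀ i j, ∑ k, l i k * r j k = if i = j then 1 else 0)
    (k : Fin n)
    (hne : ∀ᵐ x ∂(volume.restrict S), x k ≠ 0)
    (hint : ∀ j, IntegrableOn (fun x => x j / x k) S volume) :
    (∀ j, j ≠ k → ⨍ x in S, x j / x k = 0) ∧
    (∀ i, ⨍ x in S, (∑ m, l i m * x m) * r i k / x k = l i k * r i k) :=
  stmt6_general n S hSbdd hSpos hSsym r l k hne hint
end
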